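/- arXiv:math/0602664 — 2 statements merged into one kernel-verified Lean document; each statement's English description precedes it below -/
import Mathlib

section
/- If φ : ℝ^d → [0,∞) is a continuous, E-homogeneous and (β,E)-admissible function, then β ≤ a₁, where a₁ is the smallest real part of the eigenvalues of E. -/
open MeasureTheory Matrix Filter Topology

/-- For a real `d × d` matrix `E` and `c > 0`, `matPow E c = c^E = exp((log c) • E)`,
where `exp` is the matrix exponential. -/
noncomputable def matPow {d : ℕ} (E : Matrix (Fin d) (Fin d) ℝ) (c : ℝ) :
    Matrix (Fin d) (Fin d) ℝ :=
  NormedSpace.exp (Real.log c • E)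

/-- The setup of Biermé–Meerschaert–Scheffler "Operator scaling stable random fields":
a real `d × d` matrix `E` whose (complex) eigenvalues all have positive real part, the
distinct real parts of the eigenvalues being `a 0 < a 1 < ... < a (p-1)` (so `a ⟨0,_⟩ = a₁`
and `a ⟨p-1,_⟩ = a_p`); a norm `ν = ‖·‖₀` on `ℝ^d` adapted to `E`, so that every `x ≠ 0`
has a unique polar decomposition `x = τ(x)^E l(x)` with radial part `τ(x) > 0` and
direction `l(x)` on the unit sphere `S₀ = {θ | ν θ = 1}`;  `τ` is continuous with
`τ(0) = 0` and satisfies the scaling relation `τ(c^E x) = c τ(x)`. -/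
structure OSSetup (d p : ℕ) : Type where
  hd : 0 < d
  hp : 0 < p
  hpd : p ≤ d
  E : Matrix (Fin d) (Fin d) ℝ
  a : Fin p → ℝ
  a_pos : 0 < a ⟨0, hp⟩
  a_mono : StrictMono a
  spec_re : ∀ μ ∈ ((E.charpoly.map (algebraMap ℝ ℂ)).roots), ∃ i, μ.re = a i
  spec_re' : ∀ i, ∃ μ ∈ ((E.charpoly.map (algebraMap ℝ ℂ)).roots), μ.re = a i
  ν : (Fin d → ℝ) → ℝ
  ν_eq_zero : ∀ x, ν x = 0 ↔ x = 0
  ν_add : ∀ x y, ν (x + y) ≤ ν x + ν y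
  ν_smul : ∀ (c : ℝ) (x), ν (c • x) = |c| * ν x
  τ : (Fin d → ℝ) → ℝ
  l : (Fin d → ℝ) → (Fin d → ℝ)
  τ_zero : τ 0 = 0
  τ_pos : ∀ x, x ≠ 0 → 0 < τ x
  τ_cont : Continuous τ
  l_sphere : ∀ x, x ≠ 0 → ν (l x) = 1
  polar : ∀ x, x ≠ 0 → (matPow E (τ x)).mulVec (l x) = x
  polar_unique : ∀ (r : ℝ) (θ : Fin d → ℝ), 0 < r → ν θ = 1 →
    τ ((matPow E r).mulVec θ) = r ∧ l ((matPow E r).mulVec θ) = θ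
  τ_scaling : ∀ c > 0, ∀ x, τ ((matPow E c).mulVec x) = c * τ x

/-- `a₁`, the smallest real part of the eigenvalues of `E`. -/
noncomputable def OSSetup.a1 {d p : ℕ} (S : OSSetup d p) : ℝ := S.a ⟨0, S.hp⟩

/-- `a_p`, the largest real part of the eigenvalues of `E`. -/
noncomputable def OSSetup.ap {d p : ℕ} (S : OSSetup d p) : ℝ :=
  S.a ⟨p - 1, Nat.sub_lt S.hp Nat.one_pos⟩

/-- `φ` is `E`-homogeneous: `φ(c^E x) = c • φ(x)` for all `c > 0` and `x ≠ 0`. -/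
def OSSetup.EHomogeneous {d p : ℕ} (S : OSSetup d p) (φ : (Fin d → ℝ) → ℝ) : Prop :=
  ∀ c > 0, ∀ x : Fin d → ℝ, x ≠ 0 → φ ((matPow S.E c).mulVec x) = c * φ x

/-- `φ : ℝ^d → [0,∞)` is `(β,E)`-admissible: it is continuous, nonnegative, positive
off `0`, and for every `0 < A < B` there is `C > 0` with
`|φ(x+y) − φ(y)| ≤ C τ(x)^β` whenever `τ(x) ≤ 1` and `A ≤ ‖y‖ ≤ B`. -/
def OSSetup.Admissible {d p : ℕ} (S : OSSetup d p) (β : ℝ) (φ : (Fin d → ℝ) → ℝ) : Prop :=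
  0 < β ∧ Continuous φ ∧ (∀ x, 0 ≤ φ x) ∧ (∀ x, x ≠ 0 → 0 < φ x) ∧
    ∀ A B : ℝ, 0 < A → A < B → ∃ C > 0, ∀ x y : Fin d → ℝ,
      S.τ x ≤ 1 → A ≤ ‖y‖ → ‖y‖ ≤ B → |φ (x + y) - φ y| ≤ C * S.τ x ^ β

/-!
Let `μ` be an eigenvalue of `E` with `Re μ = a₁`. If `log c · Im μ ∈ 2πℤ`, the rotation part of
`c^E` on a complex `μ`-eigenvector disappears, so `c^E u = t u` for a real `u ≠ 0` and
`t = c^{a₁}`, with `0 < c < 1`. Then `τ(t^m u) = c^m τ(u)`, and admissibility bounds the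
increments of `r ↦ φ(r u)` with step `t^m` by `C τ(u)^β c^{mβ}`, which is `o(t^m)` when `β > a₁`.
A continuous function with such increments is constant, so `φ(t u) = φ(u)`; but homogeneity gives
`φ(t u) = φ(c^E u) = c φ(u)` with `c < 1` and `φ(u) > 0`.
-/

open Set

namespace Matrix

variable {n : Type*} [Fintype n]

theorem exists_mulVec_eq_smul_of_isRoot_charpoly [DecidableEq n] {K : Type*} [Field K]
    {A : Matrix n n K} {μ : K} (hμ : A.charpoly.IsRoot μ) :
    ∃ w : n → K, w ≠ 0 ∧ A *ᵥ w = μ • w := by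
  rw [← charpoly_toLin', ← Module.End.hasEigenvalue_iff_isRoot_charpoly] at hμ
  obtain ⟨w, hw⟩ := hμ.exists_hasEigenvector
  exact ⟨w, hw.2, by simpa using hw.apply_eq_smul⟩

open NormedSpace in
theorem exp_mulVec_of_mulVec_eq_smul [DecidableEq n] {N : Matrix n n ℂ} {w : n → ℂ} {z : ℂ}
    (h : N *ᵥ w = z • w) : exp N *ᵥ w = Complex.exp z • w := by
  let _ : NormedRing (Matrix n n ℂ) := Matrix.linftyOpNormedRing
  let _ : NormedAlgebra ℂ (Matrix n n ℂ) := Matrix.linftyOpNormedAlgebra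
  have hpow (k : ℕ) : (N ^ k) *ᵥ w = z ^ k • w := by
    induction k with
    | zero => simp
    | succ k ih => rw [pow_succ, ← mulVec_mulVec, h, mulVec_smul, ih, smul_smul, pow_succ']
  have hN := (exp_series_hasSum_exp' (𝕂 := ℂ) N).map (mulVec.addMonoidHomLeft w)
    (continuous_id.matrix_mulVec continuous_const)
  have hz := (exp_series_hasSum_exp' (𝕂 := ℂ) z).smul_const w
  rw [← Complex.exp_eq_exp_ℂ] at hz
  refine hN.unique ?_
  convert hz using 2 with k
  show ((_ : ℂ) • N ^ k) *ᵥ w = _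
  rw [smul_mulVec, hpow, smul_smul, smul_eq_mul]

open NormedSpace in
theorem exp_map_algebraMap [DecidableEq n] (A : Matrix n n ℝ) :
    (exp A).map (algebraMap ℝ ℂ) = exp (A.map (algebraMap ℝ ℂ)) := by
  let _ : NormedRing (Matrix n n ℝ) := Matrix.linftyOpNormedRing
  let _ : NormedAlgebra ℝ (Matrix n n ℝ) := Matrix.linftyOpNormedAlgebra
  let _ : NormedRing (Matrix n n ℂ) := Matrix.linftyOpNormedRing
  let _ : NormedAlgebra ℝ (Matrix n n ℂ) := Matrix.linftyOpNormedAlgebra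
  exact map_exp_of_mem_ball (𝕂 := ℝ) (algebraMap ℝ ℂ).mapMatrix
    (continuous_id.matrix_map (continuous_algebraMap ℝ ℂ)) A
    ((expSeries_radius_eq_top ℝ (Matrix n n ℝ)).symm ▸ edist_lt_top _ _)

theorem re_map_ofReal_mulVec (M : Matrix n n ℝ) (w : n → ℂ) :
    (fun i => ((M.map (algebraMap ℝ ℂ) *ᵥ w) i).re) = M *ᵥ fun i => (w i).re := by
  ext i
  simp [mulVec, dotProduct, Complex.re_sum]

theorem im_map_ofReal_mulVec (M : Matrix n n ℝ) (w : n → ℂ) :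
    (fun i => ((M.map (algebraMap ℝ ℂ) *ᵥ w) i).im) = M *ᵥ fun i => (w i).im := by
  ext i
  simp [mulVec, dotProduct, Complex.im_sum]

theorem exists_mulVec_eq_smul_of_map_ofReal {M : Matrix n n ℝ} {w : n → ℂ} {t : ℝ} (hw : w ≠ 0)
    (h : M.map (algebraMap ℝ ℂ) *ᵥ w = (t : ℂ) • w) : ∃ u : n → ℝ, u ≠ 0 ∧ M *ᵥ u = t • u := by
  have hre : M *ᵥ (fun i => (w i).re) = t • fun i => (w i).re := by
    rw [← M.re_map_ofReal_mulVec, h]; ext i; simp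
  have him : M *ᵥ (fun i => (w i).im) = t • fun i => (w i).im := by
    rw [← M.im_map_ofReal_mulVec, h]; ext i; simp
  by_cases hu : (fun i => (w i).re) = 0
  · refine ⟨fun i => (w i).im, fun h0 => hw (funext fun i => Complex.ext ?_ ?_), him⟩
    · exact congrFun hu i
    · exact congrFun h0 i
  · exact ⟨_, hu, hre⟩

end Matrix

theorem Complex.exp_ofReal_mul_of_mul_im_eq {L : ℝ} {μ : ℂ} {n : ℤ}
    (h : L * μ.im = n * (2 * Real.pi)) : exp (L * μ) = Real.exp (L * μ.re) := by
  have hsplit : (L : ℂ) * μ = ((L * μ.re : ℝ) : ℂ) + n * (2 * Real.pi * I) := by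
    conv_lhs => rw [← re_add_im μ]
    have : (L : ℂ) * μ.im = n * (2 * Real.pi) := by exact_mod_cast h
    push_cast
    linear_combination I * this
  rw [hsplit, exp_add, exp_int_mul_two_pi_mul_I, mul_one, ofReal_exp]

theorem exists_cexp_log_mul_eq_rpow (μ : ℂ) :
    ∃ c : ℝ, 0 < c ∧ c < 1 ∧ Complex.exp (Real.log c * μ) = (c ^ μ.re : ℝ) := by
  suffices ∃ L < 0, ∃ n : ℤ, L * μ.im = n * (2 * Real.pi) by
    obtain ⟨L, hL, n, hn⟩ := this
    refine ⟨Real.exp L, Real.exp_pos L, Real.exp_lt_one_iff.mpr hL, ?_⟩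
    rw [Real.log_exp, Complex.exp_ofReal_mul_of_mul_im_eq hn,
      Real.rpow_def_of_pos (Real.exp_pos L), Real.log_exp]
  rcases eq_or_ne μ.im 0 with him | him
  · exact ⟨-1, by norm_num, 0, by simp [him]⟩
  · refine ⟨-(2 * Real.pi) / |μ.im|,
      div_neg_of_neg_of_pos (by linarith [Real.pi_pos]) (abs_pos.mpr him), ?_⟩
    rcases abs_choice μ.im with h | h
    · exact ⟨-1, by rw [h]; field_simp; push_cast; ring⟩
    · exact ⟨1, by rw [h]; field_simp; push_cast; ring⟩

theorem exists_matPow_mulVec_eq_rpow_smul {d : ℕ} (E : Matrix (Fin d) (Fin d) ℝ) {μ : ℂ}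
    (hμ : μ ∈ (E.charpoly.map (algebraMap ℝ ℂ)).roots) :
    ∃ c : ℝ, 0 < c ∧ c < 1 ∧ ∃ u : Fin d → ℝ, u ≠ 0 ∧ matPow E c *ᵥ u = c ^ μ.re • u := by
  rw [← charpoly_map] at hμ
  obtain ⟨w, hw, hEw⟩ :=
    exists_mulVec_eq_smul_of_isRoot_charpoly (Polynomial.isRoot_of_mem_roots hμ)
  obtain ⟨c, hc0, hc1, hcμ⟩ := exists_cexp_log_mul_eq_rpow μ
  refine ⟨c, hc0, hc1, exists_mulVec_eq_smul_of_map_ofReal hw ?_⟩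
  have hlog : (Real.log c • E).map (algebraMap ℝ ℂ) *ᵥ w = ((Real.log c : ℂ) * μ) • w := by
    have : (Real.log c • E).map (algebraMap ℝ ℂ) = (Real.log c : ℂ) • E.map (algebraMap ℝ ℂ) := by
      ext i j; simp
    rw [this, smul_mulVec, hEw, smul_smul]
  rw [matPow, exp_map_algebraMap, exp_mulVec_of_mulVec_eq_smul hlog, hcμ]

theorem abs_sub_le_of_forall_abs_add_sub_le {f : ℝ → ℝ} {a b δ ε : ℝ} (hδ : 0 ≤ δ)
    (hinc : ∀ x ∈ Icc a b, |f (x + δ) - f x| ≤ ε) :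
    ∀ k : ℕ, k * δ ≤ b - a + δ → |f (a + k * δ) - f a| ≤ k * ε := by
  intro k
  induction k with
  | zero => simp
  | succ k ih =>
    intro hk
    push_cast at hk ⊢
    have hkδ : 0 ≤ k * δ := by positivity
    calc |f (a + (k + 1) * δ) - f a|
        ≤ |f (a + k * δ + δ) - f (a + k * δ)| + |f (a + k * δ) - f a| := by
          rw [add_mul, one_mul, ← add_assoc]; exact abs_sub_le _ _ _
      _ ≤ ε + k * ε := add_le_add (hinc _ ⟨by linarith, by linarith⟩) (ih (by linarith))
      _ = (k + 1) * ε := by ring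

theorem eq_of_forall_abs_add_sub_le_mul {f : ℝ → ℝ} {a b : ℝ} {h ε : ℕ → ℝ} (hab : a ≤ b)
    (hf : ContinuousWithinAt f (Ici b) b) (h_pos : ∀ m, 0 < h m)
    (h_lim : Tendsto h atTop (𝓝 0)) (ε_lim : Tendsto ε atTop (𝓝 0))
    (hinc : ∀ᶠ m in atTop, ∀ x ∈ Icc a b, |f (x + h m) - f x| ≤ ε m * h m) :
    f b = f a := by
  set k : ℕ → ℕ := fun m => ⌈(b - a) / h m⌉₊
  have hk_ge (m : ℕ) : b - a ≤ k m * h m :=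
    (div_le_iff₀ (h_pos m)).mp (Nat.le_ceil _)
  have hk_lt (m : ℕ) : k m * h m < b - a + h m := by
    have := Nat.ceil_lt_add_one (div_nonneg (sub_nonneg.mpr hab) (h_pos m).le)
    calc k m * h m < ((b - a) / h m + 1) * h m := by gcongr; exact h_pos m
      _ = b - a + h m := by field_simp [(h_pos m).ne']
  have hg : Tendsto (fun m => a + k m * h m) atTop (𝓝[≥] b) := by
    refine tendsto_nhdsWithin_iff.mpr ⟨?_, Eventually.of_forall fun m => ?_⟩
    · have hup : Tendsto (fun m => b + h m) atTop (𝓝 b) := by simpa using h_lim.const_add b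
      exact tendsto_of_tendsto_of_tendsto_of_le_of_le tendsto_const_nhds hup
        (fun m => by linarith [hk_ge m]) (fun m => by linarith [hk_lt m])
    · show b ≤ a + k m * h m; linarith [hk_ge m]
  have hbound : ∀ᶠ m in atTop, |f (a + k m * h m) - f a| ≤ (b - a + h m) * ε m := by
    filter_upwards [hinc] with m hm
    have hε : 0 ≤ ε m := nonneg_of_mul_nonneg_left
      ((abs_nonneg _).trans (hm a ⟨le_rfl, hab⟩)) (h_pos m)
    calc |f (a + k m * h m) - f a| ≤ k m * (ε m * h m) :=
          abs_sub_le_of_forall_abs_add_sub_le (h_pos m).le hm (k m) (hk_lt m).le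
      _ = (k m * h m) * ε m := by ring
      _ ≤ (b - a + h m) * ε m := by gcongr; exact (hk_lt m).le
  have hlim : Tendsto (fun m => (b - a + h m) * ε m) atTop (𝓝 0) := by
    simpa using (h_lim.const_add (b - a)).mul ε_lim
  have h1 : Tendsto (fun m => f (a + k m * h m) - f a) atTop (𝓝 (f b - f a)) :=
    (hf.tendsto.comp hg).sub_const _
  have h2 : Tendsto (fun m => f (a + k m * h m) - f a) atTop (𝓝 0) :=
    squeeze_zero_norm' hbound hlim
  exact sub_eq_zero.mp (tendsto_nhds_unique h1 h2)

namespace OSSetup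

variable {d p : ℕ} (S : OSSetup d p)

theorem τ_nonneg (x : Fin d → ℝ) : 0 ≤ S.τ x := by
  rcases eq_or_ne x 0 with rfl | hx
  · exact S.τ_zero.ge
  · exact (S.τ_pos x hx).le

theorem τ_pow_smul {c t : ℝ} (hc : 0 < c) {u : Fin d → ℝ} (hu : matPow S.E c *ᵥ u = t • u)
    (m : ℕ) : S.τ (t ^ m • u) = c ^ m * S.τ u := by
  induction m with
  | zero => simp
  | succ m ih =>
    have hstep : t ^ (m + 1) • u = matPow S.E c *ᵥ (t ^ m • u) := by
      rw [mulVec_smul, hu, smul_smul, pow_succ]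
    rw [hstep, S.τ_scaling c hc, ih, pow_succ]
    ring

theorem eventually_abs_add_smul_sub_le {φ : (Fin d → ℝ) → ℝ} {β C c : ℝ} {u : Fin d → ℝ}
    (hc0 : 0 < c) (hc1 : c < 1) (hu : matPow S.E c *ᵥ u = c ^ S.a1 • u)
    (hC : ∀ x y : Fin d → ℝ, S.τ x ≤ 1 → c ^ S.a1 * ‖u‖ ≤ ‖y‖ → ‖y‖ ≤ ‖u‖ →
      |φ (x + y) - φ y| ≤ C * S.τ x ^ β) :
    ∀ᶠ m in atTop, ∀ x ∈ Icc (c ^ S.a1) 1, |φ ((x + (c ^ S.a1) ^ m) • u) - φ (x • u)| ≤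
      C * S.τ u ^ β * (c ^ (β - S.a1)) ^ m * (c ^ S.a1) ^ m := by
  have hτ : Tendsto (fun m : ℕ => c ^ m * S.τ u) atTop (𝓝 0) := by
    simpa using (tendsto_pow_atTop_nhds_zero_of_lt_one hc0.le hc1).mul_const (S.τ u)
  filter_upwards [hτ.eventually_lt_const one_pos] with m hm x ⟨htx, hx1⟩
  have hx : 0 ≤ x := (Real.rpow_pos_of_pos hc0 _).le.trans htx
  have hxu : ‖x • u‖ = x * ‖u‖ := by rw [norm_smul, Real.norm_of_nonneg hx]
  have hinc := hC ((c ^ S.a1) ^ m • u) (x • u) (by rw [S.τ_pow_smul hc0 hu]; exact hm.le)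
    (by rw [hxu]; gcongr) (by rw [hxu]; exact mul_le_of_le_one_left (norm_nonneg u) hx1)
  rw [← add_smul, add_comm, S.τ_pow_smul hc0 hu] at hinc
  convert hinc using 1
  rw [Real.mul_rpow (pow_nonneg hc0.le m) (S.τ_nonneg u), ← Real.rpow_pow_comm hc0.le,
    mul_assoc, mul_assoc, ← mul_pow, ← Real.rpow_add hc0, sub_add_cancel]
  ring

end OSSetup

/-- If `φ` is a continuous, `E`-homogeneous, `(β,E)`-admissible function, then `β ≤ a₁`. -/
theorem stmt_5 {d p : ℕ} (S : OSSetup d p) (β : ℝ) (φ : (Fin d → ℝ) → ℝ)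
    (hhom : S.EHomogeneous φ) (hadm : S.Admissible β φ) : β ≤ S.a1 := by
  by_contra! hlt
  obtain ⟨-, hφ_cont, -, hφ_pos, hφ_incr⟩ := hadm
  obtain ⟨μ, hμ, hμre⟩ := S.spec_re' ⟨0, S.hp⟩
  obtain ⟨c, hc0, hc1, u, hu0, hcu⟩ := exists_matPow_mulVec_eq_rpow_smul S.E hμ
  rw [show μ.re = S.a1 from hμre] at hcu
  set t := c ^ S.a1
  have ht0 : 0 < t := Real.rpow_pos_of_pos hc0 _
  have ht1 : t < 1 := Real.rpow_lt_one hc0.le hc1 S.a_pos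
  have hu : 0 < ‖u‖ := norm_pos_iff.mpr hu0
  obtain ⟨C, -, hC⟩ := hφ_incr (t * ‖u‖) ‖u‖ (mul_pos ht0 hu) (mul_lt_of_lt_one_left hu ht1)
  have hq : Tendsto (fun m : ℕ => C * S.τ u ^ β * (c ^ (β - S.a1)) ^ m) atTop (𝓝 0) := by
    simpa using (tendsto_pow_atTop_nhds_zero_of_lt_one (Real.rpow_pos_of_pos hc0 _).le
      (Real.rpow_lt_one hc0.le hc1 (sub_pos.mpr hlt))).const_mul (C * S.τ u ^ β)
  have hφ_ray : φ ((1 : ℝ) • u) = φ (t • u) :=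
    eq_of_forall_abs_add_sub_le_mul (f := fun r => φ (r • u)) ht1.le
      (hφ_cont.comp (continuous_id.smul continuous_const)).continuousWithinAt
      (fun m => pow_pos ht0 m) (tendsto_pow_atTop_nhds_zero_of_lt_one ht0.le ht1) hq
      (S.eventually_abs_add_smul_sub_le hc0 hc1 hcu hC)
  have hφ_scaled := hhom c hc0 u hu0
  rw [hcu, ← hφ_ray, one_smul] at hφ_scaled
  nlinarith [hφ_pos u hu0]
end

section
/- Let ψ : ℝ^d → [0,∞) be continuous and Eᵗ-homogeneous (where Eᵗ is the transpose of E) with ψ(ξ) > 0 for all ξ ≠ 0, let 0 < α ≤ 2, 0 < H < a₁, and q = trace(E). Then for all c > 0, all m ≥ 1, all x₁, ..., x_m ∈ ℝ^d and all t₁, ..., t_m ∈ ℝ: ∫_{ℝ^d} |Σ_{j=1}^m t_j (e^{i⟨c^E x_j, ξ⟩} − 1)|^α ψ(ξ)^{−αH − q} dξ = c^{αH} · ∫_{ℝ^d} |Σ_{j=1}^m t_j (e^{i⟨x_j, ξ⟩} − 1)|^α ψ(ξ)^{−αH − q} dξ. (Since the finite-dimensional characteristic functions of the harmonizable SαS field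 are exp(−c₀ times such integrals), this expresses the operator scaling property {X_ψ(c^E x)} =f.d.= {c^H X_ψ(x)}.) -/
open MeasureTheory Matrix Filter Topology

/-!
With `η = c^{Eᵀ} ξ` one has `⟨c^E x_j, ξ⟩ = ⟨x_j, η⟩`, the Jacobian
`det c^{Eᵀ} = exp (log c · tr E) = c^q` contributes `c^{-q}`, and homogeneity of `ψ` gives
`ψ(ξ)^{-αH-q} = c^{αH+q} ψ(η)^{-αH-q}` off the null set `{0}`; the powers of `c` combine to
`c^{αH}`. The identity `det (exp A) = exp (tr A)` is obtained from the multiplicative function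
`t ↦ det (exp (t A))`, whose derivative at `0` is `tr A`.
-/

namespace Matrix

open NormedSpace

variable {ι : Type*} [Fintype ι] [DecidableEq ι]

noncomputable def detRowContinuousMultilinear :
    ContinuousMultilinearMap ℝ (fun _ : ι => ι → ℝ) ℝ :=
  { (detRowAlternating : (ι → ℝ) [⋀^ι]→ₗ[ℝ] ℝ).toMultilinearMap with
    cont := continuous_id.matrix_det }

theorem detRowContinuousMultilinear_linearDeriv_one (A : Matrix ι ι ℝ) :
    detRowContinuousMultilinear.linearDeriv (fun i => (1 : Matrix ι ι ℝ) i) (fun i => A i) =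
      A.trace := by
  rw [ContinuousMultilinearMap.linearDeriv_apply, trace]
  refine Finset.sum_congr rfl fun i _ => ?_
  have row_eq : ∑ k, A i k • (1 : Matrix ι ι ℝ) k = A i := by
    ext j
    simp [one_apply]
  calc detRowContinuousMultilinear (Function.update (fun i => (1 : Matrix ι ι ℝ) i) i (A i))
      = ((1 : Matrix ι ι ℝ).updateRow i (∑ k, A i k • (1 : Matrix ι ι ℝ) k)).det := by
        rw [row_eq]; rfl
    _ = A i i := by simp [det_updateRow_sum]

theorem hasDerivAt_exp_smul_zero (A : Matrix ι ι ℝ) :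
    HasDerivAt (fun t : ℝ => fun i => exp (t • A) i) (fun i => A i) 0 := by
  refine hasDerivAt_pi.2 fun i => hasDerivAt_pi.2 fun j => ?_
  -- any normed-algebra structure will do: the entries see only the topology
  let : NormedRing (Matrix ι ι ℝ) := Matrix.linftyOpNormedRing
  let : NormedAlgebra ℝ (Matrix ι ι ℝ) := Matrix.linftyOpNormedAlgebra
  have h := hasDerivAt_exp_smul_const A (0 : ℝ)
  simp only [zero_smul, exp_zero, one_mul] at h
  exact (entryLinearMap ℝ ℝ i j).toContinuousLinearMap.hasFDerivAt.comp_hasDerivAt (0 : ℝ) h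

theorem hasDerivAt_det_exp_smul_zero (A : Matrix ι ι ℝ) :
    HasDerivAt (fun t : ℝ => (exp (t • A)).det) A.trace 0 := by
  have h := (detRowContinuousMultilinear.hasFDerivAt
    (fun i => exp ((0 : ℝ) • A) i)).comp_hasDerivAt (0 : ℝ) (hasDerivAt_exp_smul_zero A)
  rwa [zero_smul, exp_zero, detRowContinuousMultilinear_linearDeriv_one] at h

theorem det_exp_smul (A : Matrix ι ι ℝ) (t : ℝ) :
    (exp (t • A)).det = Real.exp (t * A.trace) := by
  set g : ℝ → ℝ := fun t => (exp (t • A)).det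
  have g_add : ∀ s u, g (s + u) = g s * g u := fun s u => by
    simp only [g, add_smul, exp_add_of_commute _ _ (((Commute.refl A).smul_left s).smul_right u),
      det_mul]
  have g_deriv : ∀ s, HasDerivAt g (g s * A.trace) s := fun s => by
    have h := (HasDerivAt.comp_sub_const s s (by
      rw [sub_self]; exact hasDerivAt_det_exp_smul_zero A)).const_mul (g s)
    refine h.congr_of_eventuallyEq (Filter.Eventually.of_forall fun u => ?_)
    change g u = g s * g (u - s)
    rw [← g_add, add_sub_cancel]
  have hF : ∀ s, HasDerivAt (fun u => g u * Real.exp (-(u * A.trace))) 0 s := fun s => by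
    have he : HasDerivAt (fun u => Real.exp (-(u * A.trace)))
        (Real.exp (-(s * A.trace)) * -A.trace) s := by
      simpa using ((hasDerivAt_id s).mul_const A.trace).neg.exp
    exact ((g_deriv s).mul he).congr_deriv (by ring)
  have hconst := is_const_of_deriv_eq_zero (fun s => (hF s).differentiableAt)
    (fun s => (hF s).deriv) t 0
  simp only [g, zero_smul, exp_zero, det_one, zero_mul, neg_zero, Real.exp_zero, mul_one] at hconst
  rwa [Real.exp_neg, mul_inv_eq_one₀ (Real.exp_pos _).ne'] at hconst

theorem det_exp (A : Matrix ι ι ℝ) : (exp A).det = Real.exp A.trace := by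
  simpa using det_exp_smul A 1

end Matrix

theorem MeasureTheory.integral_comp_linearMap {E F : Type*} [NormedAddCommGroup E]
    [NormedSpace ℝ E] [MeasurableSpace E] [BorelSpace E] [FiniteDimensional ℝ E]
    (μ : Measure E) [μ.IsAddHaarMeasure] [NormedAddCommGroup F] [NormedSpace ℝ F]
    {f : E →ₗ[ℝ] E} (hf : LinearMap.det f ≠ 0) (g : E → F) :
    ∫ x, g (f x) ∂μ = |LinearMap.det f|⁻¹ • ∫ x, g x ∂μ := by
  have hf_emb : MeasurableEmbedding f := (f.equivOfDetNeZero hf).toContinuousLinearEquiv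
    |>.toHomeomorph.toMeasurableEquiv.measurableEmbedding
  rw [← hf_emb.integral_map, Measure.map_linearMap_addHaar_eq_smul_addHaar μ hf,
    integral_smul_measure, ENNReal.toReal_ofReal (abs_nonneg _), abs_inv]

theorem Matrix.integral_comp_mulVec {ι F : Type*} [Fintype ι] [DecidableEq ι]
    [NormedAddCommGroup F] [NormedSpace ℝ F] {M : Matrix ι ι ℝ} (hM : M.det ≠ 0)
    (g : (ι → ℝ) → F) :
    ∫ ξ, g (M *ᵥ ξ) = |M.det|⁻¹ • ∫ ξ, g ξ := by
  rw [← LinearMap.det_toLin'] at hM ⊢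
  exact integral_comp_linearMap volume hM g

section matPow

variable {d : ℕ} (E : Matrix (Fin d) (Fin d) ℝ)

theorem matPow_transpose (c : ℝ) : matPow Eᵀ c = (matPow E c)ᵀ := by
  rw [matPow, matPow, ← transpose_smul, exp_transpose]

theorem det_matPow {c : ℝ} (hc : 0 < c) : (matPow E c).det = c ^ E.trace := by
  rw [matPow, det_exp, trace_smul, smul_eq_mul, Real.rpow_def_of_pos hc]

theorem matPow_mulVec_dotProduct (c : ℝ) (v ξ : Fin d → ℝ) :
    matPow E c *ᵥ v ⬝ᵥ ξ = v ⬝ᵥ matPow Eᵀ c *ᵥ ξ := by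
  rw [matPow_transpose, mulVec_transpose, dotProduct_comm, dotProduct_mulVec, dotProduct_comm]

theorem integral_comp_matPow_mul_rpow_of_homogeneous (hd : 0 < d) {ψ : (Fin d → ℝ) → ℝ}
    (hψ : ∀ ξ, 0 ≤ ψ ξ) {c : ℝ} (hc : 0 < c)
    (hhom : ∀ ξ, ξ ≠ 0 → ψ (matPow E c *ᵥ ξ) = c * ψ ξ) (Φ : (Fin d → ℝ) → ℝ) (r : ℝ) :
    ∫ ξ, Φ (matPow E c *ᵥ ξ) * ψ ξ ^ r = c ^ (-r - E.trace) * ∫ ξ, Φ ξ * ψ ξ ^ r := by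
  have : Nonempty (Fin d) := ⟨⟨0, hd⟩⟩
  have hdet := det_matPow E hc
  have h_ae : ∀ᵐ ξ : Fin d → ℝ, Φ (matPow E c *ᵥ ξ) * ψ ξ ^ r
      = c ^ (-r) * (Φ (matPow E c *ᵥ ξ) * ψ (matPow E c *ᵥ ξ) ^ r) := by
    filter_upwards [(Set.countable_singleton 0).ae_notMem volume] with ξ hξ
    rw [hhom ξ hξ, Real.mul_rpow hc.le (hψ ξ), mul_left_comm, ← mul_assoc (c ^ (-r)),
      ← Real.rpow_add hc, neg_add_cancel, Real.rpow_zero, one_mul]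
  rw [integral_congr_ae h_ae, integral_const_mul,
    integral_comp_mulVec (hdet ▸ (Real.rpow_pos_of_pos hc _).ne') (fun η => Φ η * ψ η ^ r),
    hdet, abs_of_pos (Real.rpow_pos_of_pos hc _), smul_eq_mul, ← mul_assoc,
    ← Real.rpow_neg hc.le, ← Real.rpow_add hc, sub_eq_add_neg]

end matPow

theorem stmt_15_general {d p : ℕ} (S : OSSetup d p) (ψ : (Fin d → ℝ) → ℝ)
    (hnonneg : ∀ ξ, 0 ≤ ψ ξ)
    (hhom : ∀ c > (0 : ℝ), ∀ ξ : Fin d → ℝ, ξ ≠ 0 →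
      ψ ((matPow S.E.transpose c).mulVec ξ) = c * ψ ξ)
    (α H : ℝ)
    (c : ℝ) (hc : 0 < c) (m : ℕ)
    (x : Fin m → (Fin d → ℝ)) (t : Fin m → ℝ) :
    ∫ ξ, ‖∑ j, (t j : ℂ) *
          (Complex.exp (Complex.I * (((matPow S.E c).mulVec (x j) ⬝ᵥ ξ : ℝ) : ℂ)) - 1)‖ ^ α *
        ψ ξ ^ (-(α * H) - S.E.trace)
      = c ^ (α * H) *
        ∫ ξ, ‖∑ j, (t j : ℂ) *
            (Complex.exp (Complex.I * ((x j ⬝ᵥ ξ : ℝ) : ℂ)) - 1)‖ ^ α *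
          ψ ξ ^ (-(α * H) - S.E.trace) := by
  simp_rw [matPow_mulVec_dotProduct]
  rw [integral_comp_matPow_mul_rpow_of_homogeneous S.Eᵀ S.hd hnonneg hc (hhom c hc)
    (fun η => ‖∑ j, (t j : ℂ) * (Complex.exp (Complex.I * ((x j ⬝ᵥ η : ℝ) : ℂ)) - 1)‖ ^ α),
    trace_transpose, show -(-(α * H) - S.E.trace) - S.E.trace = α * H by ring]

/-- Corollary 4.2 (a): operator scaling of the harmonizable field, expressed via the
integrals appearing in the finite-dimensional characteristic functions: for all `c > 0`,
`x₁,...,x_m` and `t₁,...,t_m`,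
`∫ |Σ_j t_j(e^{i⟨c^E x_j, ξ⟩} − 1)|^α ψ(ξ)^{−αH−q} dξ
  = c^{αH} ∫ |Σ_j t_j(e^{i⟨x_j, ξ⟩} − 1)|^α ψ(ξ)^{−αH−q} dξ`. -/
theorem stmt_15 {d p : ℕ} (S : OSSetup d p) (ψ : (Fin d → ℝ) → ℝ)
    (hcont : Continuous ψ) (hnonneg : ∀ ξ, 0 ≤ ψ ξ) (hpos : ∀ ξ, ξ ≠ 0 → 0 < ψ ξ)
    (hhom : ∀ c > (0 : ℝ), ∀ ξ : Fin d → ℝ, ξ ≠ 0 →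
      ψ ((matPow S.E.transpose c).mulVec ξ) = c * ψ ξ)
    (α H : ℝ) (hα0 : 0 < α) (hα2 : α ≤ 2) (hH0 : 0 < H) (hH : H < S.a1)
    (c : ℝ) (hc : 0 < c) (m : ℕ) (hm : 1 ≤ m)
    (x : Fin m → (Fin d → ℝ)) (t : Fin m → ℝ) :
    ∫ ξ, ‖∑ j, (t j : ℂ) *
          (Complex.exp (Complex.I * (((matPow S.E c).mulVec (x j) ⬝ᵥ ξ : ℝ) : ℂ)) - 1)‖ ^ α *
        ψ ξ ^ (-(α * H) - S.E.trace)
      = c ^ (α * H) *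
        ∫ ξ, ‖∑ j, (t j : ℂ) *
            (Complex.exp (Complex.I * ((x j ⬝ᵥ ξ : ℝ) : ℂ)) - 1)‖ ^ α *
          ψ ξ ^ (-(α * H) - S.E.trace) :=
  stmt_15_general S ψ hnonneg hhom α H c hc m x t
end
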